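/- The set of prime numbers ℓ such that ℓ ≡ 1 (mod 18) and every point P of the curve y² = x³ − 1 over 𝔽_ℓ = ZMod ℓ with 3 • P = 0 is the zero point, is infinite. -/

import Mathlib

/-!
If `P = (x, y)` is a nonzero point of order dividing `3` on `y² = x³ + a` (characteristic `≠ 2`),
then `2P = -P`, so the tangent at `P` meets the curve again at `x`; this forces `x = 0` or
`x³ = -4a`, whence `a` or `-3a` is a square. For `a = -1` and a prime `ℓ ≡ 19 (mod 36)`, neither
`-1` nor `3` is a square mod `ℓ` (as `ℓ ≡ 3 (mod 4)`, and by quadratic reciprocity since also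
`ℓ ≡ 1 (mod 3)`), and Dirichlet's theorem supplies infinitely many such primes, all `≡ 1 (mod 18)`.
-/

/-- The elliptic curve `y² = x³ + a` over a field `F`. -/
def Ea (F : Type*) [Field F] (a : F) : WeierstrassCurve.Affine F :=
  { a₁ := 0, a₂ := 0, a₃ := 0, a₄ := 0, a₆ := a }

open WeierstrassCurve.Affine

namespace WeierstrassCurve.Affine.Point

variable {F : Type*} [Field F] [DecidableEq F] {W : WeierstrassCurve.Affine F}

lemma addX_self_eq_of_three_nsmul_eq_zero {x y : F} (h : W.Nonsingular x y)
    (h3 : 3 • some x y h = 0) : y ≠ W.negY x y ∧ W.addX x x (W.slope x x y y) = x := by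
  have hdouble : some x y h + some x y h = -some x y h := by
    rw [eq_neg_iff_add_eq_zero, ← two_nsmul, ← succ_nsmul]
    exact h3
  have hy : y ≠ W.negY x y := by
    intro hy
    rw [add_self_of_Y_eq hy, zero_eq_neg] at hdouble
    exact some_ne_zero h hdouble
  rw [add_self_of_Y_ne hy] at hdouble
  exact ⟨hy, X_eq_iff.mpr (Or.inr hdouble)⟩

end WeierstrassCurve.Affine.Point

namespace Ea

variable {F : Type*} [Field F] {a x y : F}

lemma equation_iff : (Ea F a).Equation x y ↔ y ^ 2 = x ^ 3 + a := by
  rw [WeierstrassCurve.Affine.equation_iff]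
  simp only [Ea]
  ring_nf

lemma negY_eq : (Ea F a).negY x y = -y := by
  simp [Ea, negY]

variable [DecidableEq F]

lemma isSquare_or_of_three_nsmul_eq_zero (h2 : (2 : F) ≠ 0) (h : (Ea F a).Nonsingular x y)
    (h3 : 3 • Point.some x y h = 0) : IsSquare a ∨ IsSquare (-3 * a) := by
  obtain ⟨hy, hx⟩ := Point.addX_self_eq_of_three_nsmul_eq_zero h h3
  have hE := equation_iff.mp h.1
  have hy0 : y ≠ 0 := fun h0 => hy (by rw [negY_eq, h0, neg_zero])
  have hslope : (Ea F a).slope x x y y = 3 * x ^ 2 / (2 * y) := by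
    rw [slope_of_Y_ne rfl hy, negY_eq]
    simp only [Ea]
    ring
  rw [hslope, addX] at hx
  simp only [Ea] at hx
  field_simp at hx
  -- the `3`-division polynomial of `y² = x³ + a` is `3x(x³ + 4a)`
  have hdiv : 3 * x * (x ^ 3 + 4 * a) = 0 := by linear_combination -hx - 12 * x * hE
  rcases mul_eq_zero.mp hdiv with h3x | hcube
  · rcases mul_eq_zero.mp h3x with h30 | hx0
    · exact Or.inr ⟨0, by rw [h30]; ring⟩
    · exact Or.inl ⟨y, by rw [← sq, hE, hx0]; ring⟩
  · exact Or.inr ⟨y, by linear_combination -hE - hcube⟩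

lemma eq_zero_of_three_nsmul_eq_zero (h2 : (2 : F) ≠ 0) (ha : ¬IsSquare a)
    (h3a : ¬IsSquare (-3 * a)) (P : (Ea F a).Point) (hP : 3 • P = 0) : P = 0 := by
  rcases P with _ | @⟨x, y, h⟩
  · rfl
  · exact ((isSquare_or_of_three_nsmul_eq_zero h2 h hP).resolve_left ha |> h3a).elim

end Ea

namespace ZMod

variable {p : ℕ} [Fact p.Prime]

lemma not_isSquare_three_of_mod_twelve_eq_seven (hp : p % 12 = 7) : ¬IsSquare (3 : ZMod p) := by
  have : Fact (Nat.Prime 3) := ⟨Nat.prime_three⟩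
  have hrec := exists_sq_eq_prime_iff_of_mod_four_eq_three (p := p) (q := 3) (by omega) rfl
    (by omega)
  have hp3 : (p : ZMod 3) = 1 := by
    rw [← natCast_mod, show p % 3 = 1 by omega, Nat.cast_one]
  push_cast at hrec
  rw [hrec, hp3, not_not]
  exact IsSquare.one

end ZMod

/-- The set of primes `ℓ ≡ 1 (mod 18)` with `Ẽ₋₁(𝔽_ℓ)[3] = 0` is infinite. -/
theorem stmt5 :
    {ℓ : ℕ | ∃ hℓ : ℓ.Prime, ℓ % 18 = 1 ∧
      (haveI : Fact ℓ.Prime := ⟨hℓ⟩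
       ∀ P : (Ea (ZMod ℓ) (-1)).Point, 3 • P = 0 → P = 0)}.Infinite := by
  refine (Nat.infinite_setOfPred_prime_and_eq_mod (q := 36) (a := 19) (by decide)).mono ?_
  rintro ℓ ⟨hℓ, hmod⟩
  have : Fact ℓ.Prime := ⟨hℓ⟩
  have h36 : ℓ % 36 = 19 := by
    rw [← ZMod.val_natCast, hmod]
    rfl
  refine ⟨hℓ, by omega, Ea.eq_zero_of_three_nsmul_eq_zero ?_ ?_ ?_⟩
  · exact Ring.two_ne_zero (by rw [ZMod.ringChar_zmod_n]; omega)
  · rw [ZMod.exists_sq_eq_neg_one_iff]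
    omega
  · rw [show -3 * (-1 : ZMod ℓ) = 3 by ring]
    exact ZMod.not_isSquare_three_of_mod_twelve_eq_seven (by omega)
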